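/- Let η₁,…,η_N be i.i.d. real random variables with E[η_k] = 0 and E[e^{η_k}] ≤ β and E[e^{−η_k}] ≤ β, and let a₁,…,a_N ∈ [0,1] be deterministic weights with Z = Σ a_k > 0. Define V = (1/Z) Σ_{k=1}^N a_k η_k. Then for every λ ∈ (0,1], P(|V| > λ) ≤ 2 exp(−λ² Z e^{−2β} / 4). -/

import Mathlib

/-!
Write `φ(y) = exp y - 1 - y`. For `|t| ≤ 1` one has
`φ(t y) ≤ t² φ(|y|) ≤ t² (exp y + exp (-y) - 2)`: the `y`-derivative of `t² φ(y) - φ(t y)` is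
nonnegative by convexity of `exp`. As `E η = 0`, this gives `E exp (t η) ≤ 1 + t² (2β - 2)
≤ 1 + exp (2β) t²` on `[-1, 1]`. By independence the moment generating function of `∑ aₖ ηₖ` at
`s ∈ [0, 1]` is then at most `exp (exp (2β) s² ∑ aₖ²)`, and `aₖ² ≤ aₖ` bounds this by
`exp (exp (2β) s² Z)`. Chernoff's bound at `s = λ exp (-2β) / 2` gives
`exp (-λ² Z exp (-2β) / 4)` for each of the two tails.
-/

open Real MeasureTheory ProbabilityTheory

theorem exp_mul_sub_one_sub_le_sq_mul {t : ℝ} (ht₀ : 0 ≤ t) (ht₁ : t ≤ 1) {y : ℝ} (hy : 0 ≤ y) :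
    exp (t * y) - 1 - t * y ≤ t ^ 2 * (exp y - 1 - y) := by
  let g : ℝ → ℝ := fun y => t ^ 2 * (exp y - 1 - y) - (exp (t * y) - 1 - t * y)
  have hg : ∀ y, HasDerivAt g (t * (t * exp y + (1 - t) - exp (t * y))) y := by
    intro y
    have := (((hasDerivAt_exp y).sub_const 1).sub (hasDerivAt_id y)).const_mul (t ^ 2) |>.sub
      ((((hasDerivAt_id y).const_mul t).exp.sub_const 1).sub ((hasDerivAt_id y).const_mul t))
    exact this.congr_deriv (by simp only [id, mul_one]; ring)
  have hmono : Monotone g := by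
    refine monotone_of_deriv_nonneg (fun y => (hg y).differentiableAt) fun y => ?_
    rw [(hg y).deriv]
    have hconv := convexOn_exp.2 (Set.mem_univ 0) (Set.mem_univ y) (by linarith : 0 ≤ 1 - t) ht₀
      (by ring)
    simp only [smul_eq_mul, mul_zero, zero_add, exp_zero, mul_one] at hconv
    exact mul_nonneg ht₀ (by linarith)
  have := hmono hy
  simp only [g, mul_zero, exp_zero, sub_self] at this
  linarith

theorem exp_neg_add_le_exp_sub {s : ℝ} (hs : 0 ≤ s) : exp (-s) + s ≤ exp s - s := by
  have := self_le_sinh_iff.2 hs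
  rw [sinh_eq] at this
  linarith

theorem exp_sub_one_sub_le_exp_abs_sub_one_sub_abs (x : ℝ) :
    exp x - 1 - x ≤ exp |x| - 1 - |x| := by
  rcases abs_cases x with ⟨hx, -⟩ | ⟨hx, hneg⟩
  · rw [hx]
  · have := exp_neg_add_le_exp_sub (neg_nonneg.2 hneg.le)
    rw [neg_neg] at this
    rw [hx]; linarith

theorem exp_mul_sub_one_sub_le {t : ℝ} (ht : t ∈ Set.Icc (-1 : ℝ) 1) (x : ℝ) :
    exp (t * x) - 1 - t * x ≤ t ^ 2 * (exp x + exp (-x) - 2) := by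
  have habs : |t| ≤ 1 := abs_le.2 ht
  have hx : exp |x| - 1 - |x| ≤ exp x + exp (-x) - 2 := by
    rcases abs_cases x with ⟨hx, -⟩ | ⟨hx, -⟩ <;> rw [hx] <;>
      linarith [add_one_le_exp x, add_one_le_exp (-x)]
  calc exp (t * x) - 1 - t * x ≤ exp (|t| * |x|) - 1 - |t| * |x| := by
        simpa only [abs_mul] using exp_sub_one_sub_le_exp_abs_sub_one_sub_abs (t * x)
    _ ≤ |t| ^ 2 * (exp |x| - 1 - |x|) :=
        exp_mul_sub_one_sub_le_sq_mul (abs_nonneg t) habs (abs_nonneg x)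
    _ ≤ t ^ 2 * (exp x + exp (-x) - 2) := by
        rw [sq_abs]; exact mul_le_mul_of_nonneg_left hx (sq_nonneg t)

section

variable {Ω : Type*} [MeasurableSpace Ω] {μ : Measure Ω}

theorem integrable_exp_mul_of_mem_Icc {X : Ω → ℝ}
    (hpos : Integrable (fun ω => exp (X ω)) μ) (hneg : Integrable (fun ω => exp (-X ω)) μ)
    {t : ℝ} (ht : t ∈ Set.Icc (-1 : ℝ) 1) :
    Integrable (fun ω => exp (t * X ω)) μ :=
  integrable_exp_mul_of_le_of_le (by simpa using hneg) (by simpa using hpos) ht.1 ht.2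

theorem mgf_le_one_add_sq_mul [IsProbabilityMeasure μ] {X : Ω → ℝ} (hX : Integrable X μ)
    (hX₀ : ∫ ω, X ω ∂μ = 0)
    (hpos : Integrable (fun ω => exp (X ω)) μ) (hneg : Integrable (fun ω => exp (-X ω)) μ)
    {t : ℝ} (ht : t ∈ Set.Icc (-1 : ℝ) 1) :
    mgf X μ t ≤ 1 + t ^ 2 * ((∫ ω, exp (X ω) ∂μ) + (∫ ω, exp (-X ω) ∂μ) - 2) := by
  have hlin : Integrable (fun ω => 1 + t * X ω) μ := (integrable_const 1).add (hX.const_mul t)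
  have hcosh : Integrable (fun ω => exp (X ω) + exp (-X ω)) μ := hpos.add hneg
  have hquad : Integrable (fun ω => t ^ 2 * (exp (X ω) + exp (-X ω) - 2)) μ :=
    (hcosh.sub (integrable_const 2)).const_mul _
  calc mgf X μ t
      ≤ ∫ ω, 1 + t * X ω + t ^ 2 * (exp (X ω) + exp (-X ω) - 2) ∂μ :=
        integral_mono (integrable_exp_mul_of_mem_Icc hpos hneg ht) (hlin.add hquad)
          fun ω => by linarith [exp_mul_sub_one_sub_le ht (X ω)]
    _ = 1 + t ^ 2 * ((∫ ω, exp (X ω) ∂μ) + (∫ ω, exp (-X ω) ∂μ) - 2) := by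
        rw [integral_add hlin hquad, integral_add (integrable_const 1) (hX.const_mul t),
          integral_const_mul, integral_const_mul, integral_sub hcosh (integrable_const 2),
          integral_add hpos hneg, hX₀]
        simp

theorem measureReal_weighted_sum_ge_le {ι : Type*} [Fintype ι] {η : ι → Ω → ℝ}
    (hmeas : ∀ k, Measurable (η k)) (hindep : iIndepFun η μ) {K : ℝ} (hK : 1 / 2 ≤ K)
    (hexp : ∀ k, ∀ t ∈ Set.Icc (0 : ℝ) 1, Integrable (fun ω => exp (t * η k ω)) μ)
    (hmgf : ∀ k, ∀ t ∈ Set.Icc (0 : ℝ) 1, mgf (η k) μ t ≤ 1 + K * t ^ 2)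
    {a : ι → ℝ} (ha : ∀ k, a k ∈ Set.Icc (0 : ℝ) 1) {lam : ℝ} (hlam : lam ∈ Set.Icc (0 : ℝ) 1) :
    μ.real {ω | lam * ∑ k, a k ≤ ∑ k, a k * η k ω} ≤ exp (-(lam ^ 2 * ∑ k, a k) / (4 * K)) := by
  have := hindep.isProbabilityMeasure
  set s := lam / (2 * K)
  have hs : s ∈ Set.Icc (0 : ℝ) 1 :=
    ⟨div_nonneg hlam.1 (by linarith), (div_le_one (by positivity)).2 (by linarith [hlam.2])⟩
  have has : ∀ k, a k * s ∈ Set.Icc (0 : ℝ) 1 := fun k =>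
    ⟨mul_nonneg (ha k).1 hs.1, mul_le_one₀ (ha k).2 hs.1 hs.2⟩
  let X : ι → Ω → ℝ := fun k ω => a k * η k ω
  have hXmeas : ∀ k, Measurable (X k) := fun k => (hmeas k).const_mul _
  have hXindep : iIndepFun X μ := hindep.comp _ fun k => measurable_const_mul (a k)
  have hXexp : ∀ k, Integrable (fun ω => exp (s * X k ω)) μ := fun k => by
    refine (hexp k _ (has k)).congr (ae_of_all _ fun ω => ?_)
    simp only [X]
    ring_nf
  have hXmgf : ∀ k, mgf (X k) μ s ≤ exp (K * s ^ 2 * a k) := fun k => by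
    obtain ⟨ha₀, ha₁⟩ := ha k
    have hsq : K * (a k * s) ^ 2 ≤ K * s ^ 2 * a k := by
      have := mul_le_mul_of_nonneg_left (mul_le_of_le_one_left ha₀ ha₁)
        (by positivity : 0 ≤ K * s ^ 2)
      linarith [show K * (a k * s) ^ 2 = K * s ^ 2 * (a k * a k) by ring]
    calc mgf (X k) μ s = mgf (η k) μ (a k * s) := mgf_const_mul _
      _ ≤ 1 + K * (a k * s) ^ 2 := hmgf k _ (has k)
      _ ≤ exp (K * (a k * s) ^ 2) := by linarith [add_one_le_exp (K * (a k * s) ^ 2)]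
      _ ≤ exp (K * s ^ 2 * a k) := exp_le_exp.2 hsq
  have hchernoff := measure_ge_le_exp_mul_mgf (lam * ∑ k, a k) hs.1
    (hXindep.integrable_exp_mul_sum (s := Finset.univ) hXmeas fun k _ => hXexp k)
  simp only [Finset.sum_apply, X] at hchernoff
  calc μ.real {ω | lam * ∑ k, a k ≤ ∑ k, a k * η k ω}
      ≤ exp (-s * (lam * ∑ k, a k)) * mgf (∑ k, X k) μ s := hchernoff
    _ = exp (-s * (lam * ∑ k, a k)) * ∏ k, mgf (X k) μ s := by
        rw [hXindep.mgf_sum hXmeas]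
    _ ≤ exp (-s * (lam * ∑ k, a k)) * ∏ k, exp (K * s ^ 2 * a k) := by
        gcongr with k
        exacts [fun k _ => mgf_nonneg, hXmgf k]
    _ = exp (-(lam ^ 2 * ∑ k, a k) / (4 * K)) := by
        rw [← exp_sum, ← exp_add, ← Finset.mul_sum]
        congr 1
        simp only [s]
        field_simp
        ring

theorem measureReal_abs_weighted_sum_ge_le {ι : Type*} [Fintype ι] {η : ι → Ω → ℝ}
    (hmeas : ∀ k, Measurable (η k)) (hindep : iIndepFun η μ) {K : ℝ} (hK : 1 / 2 ≤ K)
    (hexp : ∀ k, ∀ t ∈ Set.Icc (-1 : ℝ) 1, Integrable (fun ω => exp (t * η k ω)) μ)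
    (hmgf : ∀ k, ∀ t ∈ Set.Icc (-1 : ℝ) 1, mgf (η k) μ t ≤ 1 + K * t ^ 2)
    {a : ι → ℝ} (ha : ∀ k, a k ∈ Set.Icc (0 : ℝ) 1) {lam : ℝ} (hlam : lam ∈ Set.Icc (0 : ℝ) 1) :
    μ.real {ω | lam * ∑ k, a k ≤ |∑ k, a k * η k ω|}
      ≤ 2 * exp (-(lam ^ 2 * ∑ k, a k) / (4 * K)) := by
  have := hindep.isProbabilityMeasure
  have hneg_mem : ∀ t ∈ Set.Icc (0 : ℝ) 1, -t ∈ Set.Icc (-1 : ℝ) 1 := fun t ht =>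
    ⟨by linarith [ht.2], by linarith [ht.1]⟩
  have hupper := measureReal_weighted_sum_ge_le hmeas hindep hK
    (fun k t ht => hexp k t ⟨by linarith [ht.1], ht.2⟩)
    (fun k t ht => hmgf k t ⟨by linarith [ht.1], ht.2⟩) ha hlam
  have hlower := measureReal_weighted_sum_ge_le (η := -η) (fun k => (hmeas k).neg)
    (hindep.comp _ fun _ => measurable_neg) hK
    (fun k t ht => by simpa using hexp k (-t) (hneg_mem t ht))
    (fun k t ht => by simpa [mgf_neg] using hmgf k (-t) (hneg_mem t ht)) ha hlam
  calc μ.real {ω | lam * ∑ k, a k ≤ |∑ k, a k * η k ω|}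
      ≤ μ.real ({ω | lam * ∑ k, a k ≤ ∑ k, a k * η k ω}
          ∪ {ω | lam * ∑ k, a k ≤ ∑ k, a k * (-η) k ω}) := by
        refine measureReal_mono (fun ω hω => ?_)
        simpa [le_abs, Finset.sum_neg_distrib] using hω
    _ ≤ 2 * exp (-(lam ^ 2 * ∑ k, a k) / (4 * K)) := by
        linarith [measureReal_union_le (μ := μ) {ω | lam * ∑ k, a k ≤ ∑ k, a k * η k ω}
          {ω | lam * ∑ k, a k ≤ ∑ k, a k * (-η) k ω}]

end

theorem weighted_avg_concentration_general
    {Ω : Type*} [MeasurableSpace Ω] (μ : Measure Ω) [IsProbabilityMeasure μ]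
    (N : ℕ) (η : Fin N → Ω → ℝ) (β : ℝ) (hβ : 1 ≤ β)
    (hmeas : ∀ k, Measurable (η k))
    (hindep : iIndepFun η μ)
    (hint : ∀ k, Integrable (η k) μ)
    (hzero : ∀ k, ∫ ω, η k ω ∂μ = 0)
    (hexpint : ∀ k, Integrable (fun ω => Real.exp (η k ω)) μ)
    (hexpint' : ∀ k, Integrable (fun ω => Real.exp (-(η k ω))) μ)
    (hmgf : ∀ k, ∫ ω, Real.exp (η k ω) ∂μ ≤ β)
    (hmgf' : ∀ k, ∫ ω, Real.exp (-(η k ω)) ∂μ ≤ β)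
    (a : Fin N → ℝ) (ha : ∀ k, a k ∈ Set.Icc (0:ℝ) 1)
    (Z : ℝ) (hZ : Z = ∑ k, a k) (hZpos : 0 < Z)
    (lam : ℝ) (hlam : lam ∈ Set.Ioc (0:ℝ) 1) :
    μ {ω | lam < |(1 / Z) * ∑ k, a k * η k ω|}
      ≤ ENNReal.ofReal (2 * Real.exp (-(lam ^ 2) * Z * Real.exp (-(2 * β)) / 4)) := by
  have hK : 1 / 2 ≤ exp (2 * β) := by linarith [one_le_exp (by linarith : (0 : ℝ) ≤ 2 * β)]
  have hmgf_sq : ∀ k, ∀ t ∈ Set.Icc (-1 : ℝ) 1, mgf (η k) μ t ≤ 1 + exp (2 * β) * t ^ 2 := by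
    intro k t ht
    have hsum : (∫ ω, exp (η k ω) ∂μ) + (∫ ω, exp (-η k ω) ∂μ) - 2 ≤ exp (2 * β) := by
      linarith [hmgf k, hmgf' k, add_one_le_exp (2 * β)]
    calc mgf (η k) μ t ≤ 1 + t ^ 2 * ((∫ ω, exp (η k ω) ∂μ) + (∫ ω, exp (-η k ω) ∂μ) - 2) :=
          mgf_le_one_add_sq_mul (hint k) (hzero k) (hexpint k) (hexpint' k) ht
      _ ≤ 1 + exp (2 * β) * t ^ 2 := by nlinarith [sq_nonneg t]
  have htail := measureReal_abs_weighted_sum_ge_le hmeas hindep hK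
    (fun k _ ht => integrable_exp_mul_of_mem_Icc (hexpint k) (hexpint' k) ht) hmgf_sq ha
    (Set.Ioc_subset_Icc_self hlam)
  have hsub : {ω | lam < |(1 / Z) * ∑ k, a k * η k ω|}
      ⊆ {ω | lam * ∑ k, a k ≤ |∑ k, a k * η k ω|} := fun ω hω => by
    rw [Set.mem_ofPred_eq, abs_mul, abs_of_pos (one_div_pos.2 hZpos), one_div_mul_eq_div,
      lt_div_iff₀ hZpos] at hω
    exact hZ ▸ hω.le
  refine (measure_mono hsub).trans
    ((ENNReal.le_ofReal_iff_toReal_le (measure_ne_top _ _) (by positivity)).2 (htail.trans_eq ?_))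
  rw [hZ, exp_neg]
  congr 2
  ring

/-- Concentration of a weighted average of i.i.d. mean-zero random variables
with two-sided exponential moment bound `E[e^{±η}] ≤ β`: for weights `a_k ∈ [0,1]` with
`Z = Σ a_k > 0` and `V = (1/Z) Σ a_k η_k`, for every `λ ∈ (0,1]`,
`P(|V| > λ) ≤ 2 exp(−λ² Z e^{−2β}/4)`. -/
theorem weighted_avg_concentration
    {Ω : Type*} [MeasurableSpace Ω] (μ : Measure Ω) [IsProbabilityMeasure μ]
    (N : ℕ) (η : Fin N → Ω → ℝ) (β : ℝ) (hβ : 1 ≤ β)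
    (hmeas : ∀ k, Measurable (η k))
    (hindep : iIndepFun η μ)
    (hident : ∀ j k, IdentDistrib (η j) (η k) μ μ)
    (hint : ∀ k, Integrable (η k) μ)
    (hzero : ∀ k, ∫ ω, η k ω ∂μ = 0)
    (hexpint : ∀ k, Integrable (fun ω => Real.exp (η k ω)) μ)
    (hexpint' : ∀ k, Integrable (fun ω => Real.exp (-(η k ω))) μ)
    (hmgf : ∀ k, ∫ ω, Real.exp (η k ω) ∂μ ≤ β)
    (hmgf' : ∀ k, ∫ ω, Real.exp (-(η k ω)) ∂μ ≤ β)
    (a : Fin N → ℝ) (ha : ∀ k, a k ∈ Set.Icc (0:ℝ) 1)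
    (Z : ℝ) (hZ : Z = ∑ k, a k) (hZpos : 0 < Z)
    (lam : ℝ) (hlam : lam ∈ Set.Ioc (0:ℝ) 1) :
    μ {ω | lam < |(1 / Z) * ∑ k, a k * η k ω|}
      ≤ ENNReal.ofReal (2 * Real.exp (-(lam ^ 2) * Z * Real.exp (-(2 * β)) / 4)) :=
  weighted_avg_concentration_general μ N η β hβ hmeas hindep hint hzero hexpint hexpint' hmgf hmgf'
    a ha Z hZ hZpos lam hlam
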